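/- Let n ≥ 1 be an integer, γ and δ real numbers with n > δ + 1, let s₂ > 0, ρ ∈ (−1,1), r ∈ (−1,1), and set q = n s₂²/(2(1−ρ²)). Then ∫₀^∞ σ^{δ−n} exp(−q σ^{−2}) ₁F₁( (n−γ−1)/2; 1/2; (rρ)² q σ^{−2} ) dσ = 2^{(n−δ−3)/2} ((1−ρ²)/(n s₂²))^{(n−δ−1)/2} Γ((n−δ−1)/2) ₂F₁( (n−γ−1)/2, (n−δ−1)/2; 1/2; r²ρ² ). -/

import Mathlib

open MeasureTheory Real Set Filter Topology

/-- Pochhammer symbol (rising factorial) `(x)_m`. -/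
noncomputable def poch (x : ℝ) (m : ℕ) : ℝ := (ascPochhammer ℝ m).eval x

/-- Confluent hypergeometric function `₁F₁(a; c; z)`. -/
noncomputable def oneF1 (a c z : ℝ) : ℝ :=
  ∑' m : ℕ, poch a m / (poch c m * (m.factorial : ℝ)) * z ^ m

/-- Gauss hypergeometric function `₂F₁(a, b; c; z)`. -/
noncomputable def twoF1 (a b c z : ℝ) : ℝ :=
  ∑' m : ℕ, poch a m * poch b m / (poch c m * (m.factorial : ℝ)) * z ^ m

/-- Generalized hypergeometric function `₃F₂(a₁, a₂, a₃; b₁, b₂; z)`. -/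
noncomputable def threeF2 (a₁ a₂ a₃ b₁ b₂ z : ℝ) : ℝ :=
  ∑' m : ℕ, poch a₁ m * poch a₂ m * poch a₃ m /
      (poch b₁ m * poch b₂ m * (m.factorial : ℝ)) * z ^ m

/-- Beta function `B(u,v) = Γ(u)Γ(v)/Γ(u+v)`. -/
noncomputable def betaFn (u v : ℝ) : ℝ := Real.Gamma u * Real.Gamma v / Real.Gamma (u + v)

/-- `W_{γ,δ}(n)`, the ratio of Gamma functions from the paper. -/
noncomputable def Wgd (γ δ : ℝ) (n : ℕ) : ℝ :=
  (Real.Gamma (((n : ℝ) - γ) / 2) * Real.Gamma (((n : ℝ) - δ) / 2)) /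
    (Real.Gamma (((n : ℝ) - γ - 1) / 2) * Real.Gamma (((n : ℝ) - δ - 1) / 2))

lemma poch_zero (x : ℝ) : poch x 0 = 1 := by simp [poch]

lemma poch_succ (x : ℝ) (m : ℕ) : poch x (m + 1) = poch x m * (x + m) := by
  simp [poch, ascPochhammer_succ_eval]

lemma poch_pos {x : ℝ} (hx : 0 < x) (m : ℕ) : 0 < poch x m := by
  induction m with
  | zero => simp [poch_zero]
  | succ k ih => rw [poch_succ]; positivity

lemma poch_nonneg {x : ℝ} (hx : 0 ≤ x) (m : ℕ) : 0 ≤ poch x m := by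
  induction m with
  | zero => simp [poch_zero]
  | succ k ih => rw [poch_succ]; exact mul_nonneg ih (by positivity)

lemma abs_poch_le (x : ℝ) (m : ℕ) : |poch x m| ≤ poch |x| m := by
  induction m with
  | zero => simp [poch_zero]
  | succ k ih =>
    rw [poch_succ, poch_succ, abs_mul]
    refine mul_le_mul ih ?_ (abs_nonneg _) (poch_nonneg (abs_nonneg x) k)
    calc |x + (k : ℝ)| ≤ |x| + |(k : ℝ)| := abs_add_le _ _
      _ = |x| + k := by rw [Nat.abs_cast]

lemma Gamma_add_nat {b : ℝ} (hb : 0 < b) (m : ℕ) :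
    Real.Gamma (b + m) = Real.Gamma b * poch b m := by
  induction m with
  | zero => simp [poch_zero]
  | succ k ih =>
    have hbk : b + (k : ℝ) ≠ 0 := by positivity
    rw [poch_succ, Nat.cast_add, Nat.cast_one, ← add_assoc, Real.Gamma_add_one hbk, ih]; ring

lemma integrableOn_aux {b q : ℝ} (hb : 0 < b) (hq : 0 < q) :
    IntegrableOn (fun y : ℝ => y ^ (b - 1) * Real.exp (-(q * y))) (Ioi 0) := by
  have := integrableOn_rpow_mul_exp_neg_mul_rpow (p := 1) (s := b - 1) (b := q)
    (by linarith) one_pos hq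
  refine this.congr_fun (fun y hy => ?_) measurableSet_Ioi
  beta_reduce
  rw [Real.rpow_one]; ring_nf

lemma integrableOn_rpow_exp_inv_sq {b q : ℝ} (hb : 0 < b) (hq : 0 < q) :
    IntegrableOn (fun x : ℝ => x ^ (-2 * b - 1) * Real.exp (-q / x ^ 2)) (Ioi 0) := by
  have key := (integrableOn_Ioi_comp_rpow_iff' (fun y : ℝ => y ^ (b - 1) * Real.exp (-(q * y)))
    (p := (-2 : ℝ)) (by norm_num)).mpr (integrableOn_aux hb hq)
  refine key.congr_fun (fun x hx => ?_) measurableSet_Ioi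
  have hx0 : (0 : ℝ) < x := hx
  have h1 : x ^ ((-2 : ℝ)) = (x ^ 2)⁻¹ := by
    rw [← Real.rpow_natCast x 2, ← Real.rpow_neg hx0.le]; norm_num
  have h2 : (x ^ ((-2:ℝ))) ^ (b - 1) = x ^ ((-2) * (b - 1)) := (Real.rpow_mul hx0.le _ _).symm
  have hexp : Real.exp (-(q * x ^ ((-2:ℝ)))) = Real.exp (-q / x ^ 2) := by
    rw [h1]; congr 1; ring
  have h3 : x ^ ((-2:ℝ) - 1) * x ^ ((-2) * (b - 1)) = x ^ (-2 * b - 1) := by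
    rw [← Real.rpow_add hx0]; congr 1; ring
  beta_reduce
  rw [smul_eq_mul, h2, hexp]
  linear_combination Real.exp (-q / x ^ 2) * h3

lemma integral_rpow_exp_inv_sq {b q : ℝ} (hb : 0 < b) (hq : 0 < q) :
    ∫ x in Ioi (0 : ℝ), x ^ (-2 * b - 1) * Real.exp (-q / x ^ 2)
      = 1 / 2 * q ^ (-b) * Real.Gamma b := by
  have key := integral_comp_rpow_Ioi (fun y : ℝ => y ^ (b - 1) * Real.exp (-(q * y)))
    (p := (-2 : ℝ)) (by norm_num)
  rw [integral_rpow_mul_exp_neg_mul_Ioi hb hq] at key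
  have congr1 : ∀ x ∈ Ioi (0:ℝ),
      (|(-2 : ℝ)| * x ^ ((-2:ℝ) - 1)) • ((x ^ ((-2:ℝ))) ^ (b - 1) * Real.exp (-(q * x ^ ((-2:ℝ)))))
        = 2 * (x ^ (-2 * b - 1) * Real.exp (-q / x ^ 2)) := by
    intro x hx
    have hx0 : (0 : ℝ) < x := hx
    have h1 : x ^ ((-2 : ℝ)) = (x ^ 2)⁻¹ := by
      rw [← Real.rpow_natCast x 2, ← Real.rpow_neg hx0.le]; norm_num
    have h2 : (x ^ ((-2:ℝ))) ^ (b - 1) = x ^ ((-2) * (b - 1)) := (Real.rpow_mul hx0.le _ _).symm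
    have hexp : Real.exp (-(q * x ^ ((-2:ℝ)))) = Real.exp (-q / x ^ 2) := by
      rw [h1]; congr 1; ring
    have h3 : x ^ ((-2:ℝ) - 1) * x ^ ((-2) * (b - 1)) = x ^ (-2 * b - 1) := by
      rw [← Real.rpow_add hx0]; congr 1; ring
    have habs : |(-2 : ℝ)| = 2 := by norm_num
    rw [smul_eq_mul, h2, hexp, habs]
    linear_combination 2 * Real.exp (-q / x ^ 2) * h3
  rw [setIntegral_congr_fun measurableSet_Ioi congr1, integral_const_mul] at key
  have h4 : (1 / q) ^ b = q ^ (-b) := by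
    rw [one_div, ← Real.rpow_neg_one q, ← Real.rpow_mul hq.le]; ring_nf
  rw [h4] at key
  linarith [key]

lemma tendsto_ratio_aux (A B : ℝ) (hB : 0 < B) :
    Tendsto (fun m : ℕ => (A + m) / (B + m)) atTop (𝓝 1) := by
  have h0 : Tendsto (fun m : ℕ => (A - B) / (B + m)) atTop (𝓝 0) := by
    apply Tendsto.div_atTop (tendsto_const_nhds)
    exact tendsto_atTop_add_const_left _ _ tendsto_natCast_atTop_atTop
  have h1 : Tendsto (fun m : ℕ => 1 + (A - B) / (B + m)) atTop (𝓝 (1 + 0)) :=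
    tendsto_const_nhds.add h0
  rw [add_zero] at h1
  refine h1.congr (fun m => ?_)
  have : B + (m : ℝ) ≠ 0 := by positivity
  field_simp
  ring

lemma hyp_summable {A b z : ℝ} (hA : 0 ≤ A) (hb : 0 < b) (hz0 : 0 ≤ z) (hz1 : z < 1) :
    Summable (fun m : ℕ => poch A m * poch b m / (poch (1 / 2) m * (m.factorial : ℝ)) * z ^ m) := by
  set f := fun m : ℕ => poch A m * poch b m / (poch (1 / 2) m * (m.factorial : ℝ)) * z ^ m with hf
  have hfnn : ∀ m, 0 ≤ f m := fun m => by
    have := poch_nonneg hA m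
    have := (poch_pos hb m).le
    have := (poch_pos (by norm_num : (0:ℝ) < 1/2) m).le
    positivity
  set r := (1 + z) / 2 with hrdef
  have hr1 : r < 1 := by rw [hrdef]; linarith
  have hzr : z < r := by rw [hrdef]; linarith
  apply summable_of_ratio_norm_eventually_le hr1
  have htend : Tendsto (fun m : ℕ => (A + m) / (1 + m) * ((b + m) / (1/2 + m)) * z)
      atTop (𝓝 (1 * 1 * z)) := by
    exact ((tendsto_ratio_aux A 1 one_pos).mul (tendsto_ratio_aux b (1/2) (by norm_num))).mul
      tendsto_const_nhds
  rw [one_mul, one_mul] at htend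
  filter_upwards [htend.eventually_le_const hzr] with m hm
  have hratio : f (m + 1) = f m * ((A + m) / (1 + m) * ((b + m) / (1/2 + m)) * z) := by
    rw [hf]
    simp only []
    rw [poch_succ, poch_succ, poch_succ, Nat.factorial_succ, pow_succ]
    have h1 : poch (1/2) m ≠ 0 := (poch_pos (by norm_num) m).ne'
    have h2 : ((m.factorial : ℝ)) ≠ 0 := Nat.cast_ne_zero.mpr m.factorial_ne_zero
    have h3 : (1/2 + (m:ℝ)) ≠ 0 := by positivity
    have h4 : (1 + (m:ℝ)) ≠ 0 := by positivity
    push_cast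
    field_simp
    ring
  rw [Real.norm_of_nonneg (hfnn _), Real.norm_of_nonneg (hfnn _), hratio]
  calc f m * ((A + m) / (1 + m) * ((b + m) / (1/2 + m)) * z) ≤ f m * r := by
        apply mul_le_mul_of_nonneg_left hm (hfnn m)
    _ = r * f m := mul_comm _ _

/-- Step (iii), even part: integrating `σ₂` out of the function `k(n, r | ρ, σ₂)`
(Gradshteyn & Ryzhik Eq. 7.621.4). -/
theorem sigma2_integrated_out_even (n : ℕ) (hn : 1 ≤ n) (γ δ : ℝ) (hδ : δ + 1 < (n : ℝ))
    (s2 : ℝ) (hs2 : 0 < s2) (ρ : ℝ) (hρ : ρ ∈ Ioo (-1 : ℝ) 1)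
    (r : ℝ) (hr : r ∈ Ioo (-1 : ℝ) 1) (q : ℝ) (hq : q = (n : ℝ) * s2 ^ 2 / (2 * (1 - ρ ^ 2))) :
    (∫ σ in Ioi (0 : ℝ),
        σ ^ (δ - (n : ℝ)) * Real.exp (-q / σ ^ 2) *
          oneF1 (((n : ℝ) - γ - 1) / 2) (1 / 2) ((r * ρ) ^ 2 * q / σ ^ 2)) =
      (2 : ℝ) ^ (((n : ℝ) - δ - 3) / 2) *
        ((1 - ρ ^ 2) / ((n : ℝ) * s2 ^ 2)) ^ (((n : ℝ) - δ - 1) / 2) *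
        Real.Gamma (((n : ℝ) - δ - 1) / 2) *
        twoF1 (((n : ℝ) - γ - 1) / 2) (((n : ℝ) - δ - 1) / 2) (1 / 2) (r ^ 2 * ρ ^ 2) := by
  obtain ⟨hρ1, hρ2⟩ := hρ
  obtain ⟨hr1, hr2⟩ := hr
  have h1ρ : 0 < 1 - ρ ^ 2 := by nlinarith
  have hn0 : (0:ℝ) < (n:ℝ) := by exact_mod_cast hn
  have hq0 : 0 < q := by
    rw [hq]; exact div_pos (mul_pos hn0 (pow_pos hs2 2)) (mul_pos two_pos h1ρ)
  set a : ℝ := ((n:ℝ) - γ - 1) / 2 with ha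
  set b : ℝ := ((n:ℝ) - δ - 1) / 2 with hbdef
  have hb : 0 < b := by rw [hbdef]; linarith
  set z : ℝ := r ^ 2 * ρ ^ 2 with hzdef
  have hz0 : 0 ≤ z := by rw [hzdef]; positivity
  have hz1 : z < 1 := by rw [hzdef]; nlinarith
  have hPm : ∀ m : ℕ, (0:ℝ) < poch (1/2) m * m.factorial := fun m =>
    mul_pos (poch_pos (by norm_num) m) (by exact_mod_cast m.factorial_pos)
  set F : ℕ → ℝ → ℝ := fun m x =>
    poch a m / (poch (1/2) m * (m.factorial : ℝ)) * z ^ m * q ^ m *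
      (x ^ (-2 * (b + m) - 1) * Real.exp (-q / x ^ 2)) with hF
  have hbm : ∀ m : ℕ, 0 < b + (m:ℝ) := fun m => by positivity
  have hint : ∀ m : ℕ, IntegrableOn (F m) (Ioi 0) := fun m =>
    (integrableOn_rpow_exp_inv_sq (hbm m) hq0).const_mul _
  have hqm : ∀ m : ℕ, (q:ℝ) ^ m * q ^ (-(b + (m:ℝ))) = q ^ (-b) := by
    intro m
    rw [← Real.rpow_natCast q m, ← Real.rpow_add hq0]
    congr 1; ring
  -- value of each integral
  have hval : ∀ m : ℕ, (∫ x in Ioi (0:ℝ), F m x)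
      = 1 / 2 * q ^ (-b) * Real.Gamma b *
        (poch a m * poch b m / (poch (1/2) m * (m.factorial : ℝ)) * z ^ m) := by
    intro m
    rw [hF]
    simp only []
    rw [integral_const_mul, integral_rpow_exp_inv_sq (hbm m) hq0,
      Gamma_add_nat hb m]
    linear_combination (poch a m * poch b m * Real.Gamma b * z ^ m /
      (2 * (poch (1/2) m * (m.factorial : ℝ)))) * hqm m
  -- norm of each integral
  have hnorm : ∀ m : ℕ, (∫ x in Ioi (0:ℝ), ‖F m x‖)
      = |poch a m| / (poch (1/2) m * (m.factorial : ℝ)) * z ^ m * q ^ m *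
        (1 / 2 * q ^ (-(b + (m:ℝ))) * Real.Gamma (b + m)) := by
    intro m
    have hptw : ∀ x ∈ Ioi (0:ℝ), ‖F m x‖
        = |poch a m| / (poch (1/2) m * (m.factorial : ℝ)) * z ^ m * q ^ m *
          (x ^ (-2 * (b + (m:ℝ)) - 1) * Real.exp (-q / x ^ 2)) := by
      intro x hx
      have hx0 : (0:ℝ) < x := hx
      have h5 : 0 < x ^ (-2 * (b + (m:ℝ)) - 1) * Real.exp (-q / x ^ 2) :=
        mul_pos (Real.rpow_pos_of_pos hx0 _) (Real.exp_pos _)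
      rw [hF]
      simp only []
      rw [Real.norm_eq_abs, abs_mul, abs_of_pos h5, abs_mul, abs_mul,
        abs_of_nonneg (pow_nonneg hz0 m), abs_of_nonneg (pow_nonneg hq0.le m),
        abs_div, abs_of_pos (hPm m)]
    rw [setIntegral_congr_fun measurableSet_Ioi hptw, integral_const_mul,
      integral_rpow_exp_inv_sq (hbm m) hq0]
  -- summability of the norms
  have hsum : Summable (fun m => ∫ x in Ioi (0:ℝ), ‖F m x‖) := by
    have hS := (hyp_summable (abs_nonneg a) hb hz0 hz1).mul_left
      (1 / 2 * q ^ (-b) * Real.Gamma b)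
    refine Summable.of_nonneg_of_le (fun m => ?_) (fun m => ?_) hS
    · rw [hnorm m]
      have := (hPm m).le
      have := Real.Gamma_nonneg_of_nonneg (hbm m).le
      have := (Real.rpow_pos_of_pos hq0 (-(b + (m:ℝ)))).le
      positivity
    · rw [hnorm m, Gamma_add_nat hb m]
      have h2 := hqm m
      have hK : (0:ℝ) ≤ 1 / 2 * q ^ (-b) * Real.Gamma b := by
        have := (Real.rpow_pos_of_pos hq0 (-b)).le
        have := Real.Gamma_nonneg_of_nonneg hb.le
        positivity
      have heq : |poch a m| / (poch (1/2) m * (m.factorial : ℝ)) * z ^ m * q ^ m *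
          (1 / 2 * q ^ (-(b + (m:ℝ))) * (Real.Gamma b * poch b m))
          = 1 / 2 * q ^ (-b) * Real.Gamma b *
            (|poch a m| * poch b m / (poch (1/2) m * (m.factorial : ℝ)) * z ^ m) := by
        linear_combination (|poch a m| * poch b m * Real.Gamma b * z ^ m /
          (2 * (poch (1/2) m * (m.factorial : ℝ)))) * h2
      rw [heq]
      apply mul_le_mul_of_nonneg_left _ hK
      have h3 : |poch a m| * poch b m ≤ poch |a| m * poch b m :=
        mul_le_mul_of_nonneg_right (abs_poch_le a m) (poch_pos hb m).le
      have h4 : (0:ℝ) ≤ z ^ m := pow_nonneg hz0 m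
      apply mul_le_mul_of_nonneg_right _ h4
      exact div_le_div_of_nonneg_right h3 (hPm m).le
  -- swap integral and sum
  have hswap := MeasureTheory.integral_tsum_of_summable_integral_norm hint hsum
  -- pointwise identity
  have hpt : ∀ x ∈ Ioi (0:ℝ),
      x ^ (δ - (n:ℝ)) * Real.exp (-q / x ^ 2) * oneF1 a (1/2) ((r*ρ)^2 * q / x ^ 2)
        = ∑' m, F m x := by
    intro x hx
    have hx0 : (0:ℝ) < x := hx
    rw [oneF1, ← tsum_mul_left]
    refine tsum_congr fun m => ?_
    have hw : ((r*ρ)^2 * q / x ^ 2) ^ m = z ^ m * q ^ m * ((x ^ 2)⁻¹) ^ m := by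
      rw [show (r*ρ)^2 * q / x ^ 2 = z * q * (x ^ 2)⁻¹ by rw [hzdef]; ring, mul_pow, mul_pow]
    have hxp : x ^ (δ - (n:ℝ)) * ((x ^ 2)⁻¹) ^ m = x ^ (-2 * (b + (m:ℝ)) - 1) := by
      have hi : ((x ^ 2)⁻¹ : ℝ) ^ m = x ^ (-(2 * (m:ℝ))) := by
        rw [inv_pow, ← pow_mul, ← Real.rpow_natCast x (2 * m), ← Real.rpow_neg hx0.le]
        push_cast; ring_nf
      rw [hi, ← Real.rpow_add hx0]
      congr 1
      rw [hbdef]; ring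
    rw [hF]
    simp only []
    rw [hw]
    linear_combination (poch a m / (poch (1/2) m * (m.factorial : ℝ)) * z ^ m * q ^ m *
      Real.exp (-q / x ^ 2)) * hxp
  rw [setIntegral_congr_fun measurableSet_Ioi hpt, ← hswap]
  -- evaluate the sum
  have hfin : ∑' m, (∫ x in Ioi (0:ℝ), F m x)
      = 1 / 2 * q ^ (-b) * Real.Gamma b * twoF1 a b (1/2) z := by
    rw [twoF1, ← tsum_mul_left]
    exact tsum_congr fun m => hval m
  rw [hfin]
  -- match constants
  have hu : (0:ℝ) < (1 - ρ ^ 2) / ((n:ℝ) * s2 ^ 2) := by positivity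
  have hqinv : q⁻¹ = 2 * ((1 - ρ ^ 2) / ((n:ℝ) * s2 ^ 2)) := by
    rw [hq, inv_div]
    ring
  have hqb : q ^ (-b) = 2 ^ b * ((1 - ρ ^ 2) / ((n:ℝ) * s2 ^ 2)) ^ b := by
    rw [Real.rpow_neg hq0.le, ← Real.inv_rpow hq0.le, hqinv,
      Real.mul_rpow (by norm_num) hu.le]
  have h2b : (1:ℝ) / 2 * 2 ^ b = 2 ^ (((n:ℝ) - δ - 3) / 2) := by
    rw [show ((n:ℝ) - δ - 3) / 2 = b + (-1) by rw [hbdef]; ring,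
      Real.rpow_add (by norm_num : (0:ℝ) < 2), Real.rpow_neg_one]
    ring
  rw [hqb]
  linear_combination (((1 - ρ ^ 2) / ((n:ℝ) * s2 ^ 2)) ^ b * Real.Gamma b *
    twoF1 a b (1/2) z) * h2b
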